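/- Let P, Q be probability measures on ℝ with quantile functions F_P^←, F_Q^←. Then inf over all couplings π of P and Q of ∫ (u−v)²/2 dπ(u,v) equals ∫₀¹ (F_P^←(x) − F_Q^←(x))²/2 dx. -/

import Mathlib

open MeasureTheory Set ENNReal

/-!
The cost `(u - v)² / 2` is the area of the triangle `{(s, t) | min u v ≤ s < t < max u v}`, so
by Tonelli the cost of a coupling `π` is `∫∫_{s < t} π (crossing s t) ds dt`, where
`crossing s t` is the set of pairs with one coordinate `≤ s` and the other `> t`. For `s < t`
the marginals force `π (crossing s t) ≥ (F_P(s) - F_Q(t))⁺ + (F_Q(s) - F_P(t))⁺`, and the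
quantile coupling `x ↦ (F_P^←(x), F_Q^←(x))`, `x` uniform on `(0, 1)`, attains this bound since
`F^←(x) ≤ z ↔ x ≤ F(z)`. Hence the quantile coupling is optimal, and its cost is the right-hand
side.
-/

noncomputable def cdf (P : Measure ℝ) (z : ℝ) : ℝ := (P (Iic z)).toReal

/-- Quantile function (generalized inverse of the cdf); as an `sInf` of reals it is junk
outside `(0, 1)`. -/
noncomputable def quantile (P : Measure ℝ) (x : ℝ) : ℝ := sInf {z : ℝ | x ≤ cdf P z}

section Quantile

variable {P : Measure ℝ} [IsProbabilityMeasure P]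

lemma cdf_eq_probabilityTheory_cdf : cdf P = ProbabilityTheory.cdf P :=
  funext fun z => (ProbabilityTheory.cdf_eq_real P z).symm

lemma quantile_le_iff {x z : ℝ} (hx : x ∈ Ioo 0 1) : quantile P x ≤ z ↔ x ≤ cdf P z := by
  rw [quantile, cdf_eq_probabilityTheory_cdf]
  set F := ProbabilityTheory.cdf P
  have hne : {z | x ≤ F z}.Nonempty :=
    ((ProbabilityTheory.tendsto_cdf_atTop P).eventually (eventually_ge_nhds hx.2)).exists
  obtain ⟨z₀, hz₀⟩ := ((ProbabilityTheory.tendsto_cdf_atBot P).eventually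
    (eventually_lt_nhds hx.1)).exists_forall_of_atBot
  have hbdd : BddBelow {z | x ≤ F z} :=
    ⟨z₀, fun z hz => le_of_not_gt fun hlt => (hz.trans_lt (hz₀ z hlt.le)).false⟩
  refine ⟨fun h => ?_, fun h => csInf_le hbdd h⟩
  refine le_trans ?_ (F.mono h)
  refine ge_of_tendsto ((F.right_continuous _).mono Ioi_subset_Ici_self).tendsto ?_
  filter_upwards [self_mem_nhdsWithin] with w hw
  obtain ⟨v, hv, hvw⟩ := exists_lt_of_csInf_lt hne hw
  exact hv.trans (F.mono hvw.le)

lemma monotoneOn_quantile : MonotoneOn (quantile P) (Ioo 0 1) := fun _ ha _ hb hab =>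
  (quantile_le_iff ha).2 (hab.trans ((quantile_le_iff hb).1 le_rfl))

lemma ofReal_cdf (z : ℝ) : ENNReal.ofReal (cdf P z) = P (Iic z) := by
  rw [cdf_eq_probabilityTheory_cdf, ProbabilityTheory.ofReal_cdf]

lemma aemeasurable_quantile : AEMeasurable (quantile P) (volume.restrict (Ioo 0 1)) :=
  aemeasurable_restrict_of_monotoneOn measurableSet_Ioo monotoneOn_quantile

lemma map_quantile : (volume.restrict (Ioo 0 1)).map (quantile P) = P := by
  refine Measure.ext_of_Iic _ _ fun z => ?_
  rw [Measure.map_apply_of_aemeasurable aemeasurable_quantile measurableSet_Iic,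
    Measure.restrict_apply' measurableSet_Ioo, ← ofReal_cdf]
  have hF : cdf P z ≤ 1 := cdf_eq_probabilityTheory_cdf (P := P) ▸ ProbabilityTheory.cdf_le_one P z
  refine le_antisymm ?_ ?_
  · calc volume (quantile P ⁻¹' Iic z ∩ Ioo 0 1) ≤ volume (Ioc 0 (cdf P z)) :=
          measure_mono fun x hx => ⟨hx.2.1, (quantile_le_iff hx.2).1 hx.1⟩
      _ = _ := by rw [Real.volume_Ioc, sub_zero]
  · calc ENNReal.ofReal (cdf P z) = volume (Ioo 0 (cdf P z)) := by rw [Real.volume_Ioo, sub_zero]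
      _ ≤ _ := measure_mono fun x (hx : x ∈ Ioo 0 (cdf P z)) =>
          have hx' : x ∈ Ioo 0 1 := ⟨hx.1, hx.2.trans_le hF⟩
          show x ∈ quantile P ⁻¹' Iic z ∩ Ioo 0 1 from ⟨(quantile_le_iff hx').2 hx.2.le, hx'⟩

end Quantile

def crossing (s t : ℝ) : Set (ℝ × ℝ) := {p | p.1 ≤ s ∧ t < p.2} ∪ {p | p.2 ≤ s ∧ t < p.1}

lemma measurableSet_crossing (s t : ℝ) : MeasurableSet (crossing s t) := by
  unfold crossing; measurability

lemma swap_mem_crossing {s t : ℝ} {p : ℝ × ℝ} : p.swap ∈ crossing s t ↔ p ∈ crossing s t :=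
  Or.comm

def layerSet : Set ((ℝ × ℝ) × (ℝ × ℝ)) := {r | r.2.1 < r.2.2 ∧ r.1 ∈ crossing r.2.1 r.2.2}

lemma measurableSet_layerSet : MeasurableSet layerSet := by
  unfold layerSet crossing; measurability

lemma volume_layer_of_le {u v : ℝ} (huv : u ≤ v) :
    volume (Prod.mk (u, v) ⁻¹' layerSet) = ENNReal.ofReal ((u - v) ^ 2 / 2) := by
  have hset : Prod.mk (u, v) ⁻¹' layerSet = regionBetween id (fun _ => v) (Icc u v) := by
    ext ⟨s, t⟩
    simp only [layerSet, crossing, mem_preimage, mem_ofPred_eq, mem_union, regionBetween, mem_Icc,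
      mem_Ioo, id]
    constructor
    · rintro ⟨hst, ⟨hu, hv⟩ | ⟨hv, hu⟩⟩
      · exact ⟨⟨hu, by linarith⟩, hst, hv⟩
      · linarith
    · rintro ⟨⟨hu, -⟩, hst, hv⟩
      exact ⟨hst, Or.inl ⟨hu, hv⟩⟩
  rw [hset, Measure.volume_eq_prod, volume_regionBetween_eq_integral
    (continuous_id.integrableOn_Icc) (continuous_const.integrableOn_Icc) measurableSet_Icc
    fun x hx => hx.2, integral_Icc_eq_integral_Ioc, ← intervalIntegral.integral_of_le huv]
  simp only [Pi.sub_apply, id]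
  rw [intervalIntegral.integral_sub intervalIntegrable_const intervalIntegral.intervalIntegrable_id,
    intervalIntegral.integral_const, integral_id, smul_eq_mul]
  ring_nf

lemma volume_layer (p : ℝ × ℝ) :
    volume (Prod.mk p ⁻¹' layerSet) = ENNReal.ofReal ((p.1 - p.2) ^ 2 / 2) := by
  obtain ⟨u, v⟩ := p
  rcases le_total u v with huv | hvu
  · exact volume_layer_of_le huv
  · have hswap : Prod.mk (u, v) ⁻¹' layerSet = Prod.mk (v, u) ⁻¹' layerSet := by
      ext q; exact and_congr_right fun _ => swap_mem_crossing.symm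
    rw [hswap, volume_layer_of_le hvu]
    ring_nf

lemma lintegral_cost_eq (π : Measure (ℝ × ℝ)) [SFinite π] :
    ∫⁻ p, ENNReal.ofReal ((p.1 - p.2) ^ 2 / 2) ∂π = ∫⁻ q, π ((·, q) ⁻¹' layerSet) := by
  simp_rw [← volume_layer]
  rw [← Measure.prod_apply measurableSet_layerSet, Measure.prod_apply_symm measurableSet_layerSet]

lemma sub_le_measure_le_lt {P Q : Measure ℝ} {π : Measure (ℝ × ℝ)} (hP : π.map Prod.fst = P)
    (hQ : π.map Prod.snd = Q) (s t : ℝ) :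
    P (Iic s) - Q (Iic t) ≤ π {p | p.1 ≤ s ∧ t < p.2} := by
  rw [tsub_le_iff_right, ← hP, ← hQ, Measure.map_apply measurable_fst measurableSet_Iic,
    Measure.map_apply measurable_snd measurableSet_Iic]
  calc π (Prod.fst ⁻¹' Iic s) ≤ π ({p | p.1 ≤ s ∧ t < p.2} ∪ Prod.snd ⁻¹' Iic t) :=
        measure_mono fun p (hp : p.1 ≤ s) => (le_or_gt p.2 t).elim Or.inr fun h => Or.inl ⟨hp, h⟩
    _ ≤ _ := measure_union_le _ _

lemma le_measure_crossing {P Q : Measure ℝ} {π : Measure (ℝ × ℝ)} (hP : π.map Prod.fst = P)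
    (hQ : π.map Prod.snd = Q) {s t : ℝ} (hst : s < t) :
    P (Iic s) - Q (Iic t) + (Q (Iic s) - P (Iic t)) ≤ π (crossing s t) := by
  have hP' : (π.map Prod.swap).map Prod.snd = P := by
    rw [Measure.map_map measurable_snd measurable_swap]; exact hP
  have hQ' : (π.map Prod.swap).map Prod.fst = Q := by
    rw [Measure.map_map measurable_fst measurable_swap]; exact hQ
  have hdisj : Disjoint {p : ℝ × ℝ | p.1 ≤ s ∧ t < p.2} {p | p.2 ≤ s ∧ t < p.1} :=
    disjoint_left.2 fun p h h' => by linarith [h.1, h.2, h'.1, h'.2]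
  rw [crossing, measure_union hdisj (by measurability)]
  gcongr
  · exact sub_le_measure_le_lt hP hQ s t
  · calc Q (Iic s) - P (Iic t) ≤ π.map Prod.swap {p | p.1 ≤ s ∧ t < p.2} :=
          sub_le_measure_le_lt hQ' hP' s t
      _ = π {p | p.2 ≤ s ∧ t < p.1} := Measure.map_apply measurable_swap (by measurability)

noncomputable def quantileCoupling (P Q : Measure ℝ) : Measure (ℝ × ℝ) :=
  (volume.restrict (Ioo 0 1)).map fun x => (quantile P x, quantile Q x)

section QuantileCoupling

variable {P Q : Measure ℝ} [IsProbabilityMeasure P] [IsProbabilityMeasure Q]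

lemma aemeasurable_quantile_prodMk :
    AEMeasurable (fun x => (quantile P x, quantile Q x)) (volume.restrict (Ioo 0 1)) :=
  aemeasurable_quantile.prodMk aemeasurable_quantile

lemma map_fst_quantileCoupling : (quantileCoupling P Q).map Prod.fst = P := by
  rw [quantileCoupling, AEMeasurable.map_map_of_aemeasurable measurable_fst.aemeasurable
    aemeasurable_quantile_prodMk]
  exact map_quantile

lemma map_snd_quantileCoupling : (quantileCoupling P Q).map Prod.snd = Q := by
  rw [quantileCoupling, AEMeasurable.map_map_of_aemeasurable measurable_snd.aemeasurable
    aemeasurable_quantile_prodMk]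
  exact map_quantile

instance : IsProbabilityMeasure (quantileCoupling P Q) :=
  ⟨by rw [← preimage_univ, ← Measure.map_apply measurable_fst MeasurableSet.univ,
    map_fst_quantileCoupling, measure_univ]⟩

lemma lintegral_cost_quantileCoupling :
    ∫⁻ p, ENNReal.ofReal ((p.1 - p.2) ^ 2 / 2) ∂quantileCoupling P Q
      = ∫⁻ x in Ioo 0 1, ENNReal.ofReal ((quantile P x - quantile Q x) ^ 2 / 2) :=
  lintegral_map' (by fun_prop) aemeasurable_quantile_prodMk

lemma volume_quantile_le_lt_quantile (s t : ℝ) :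
    volume.restrict (Ioo 0 1) {x | quantile P x ≤ s ∧ t < quantile Q x}
      ≤ P (Iic s) - Q (Iic t) := by
  rw [Measure.restrict_apply' measurableSet_Ioo, ← ofReal_cdf, ← ofReal_cdf,
    ← ENNReal.ofReal_sub _ (show 0 ≤ cdf Q t from ENNReal.toReal_nonneg), ← Real.volume_Ioc]
  refine measure_mono fun x ⟨⟨hs, ht⟩, hx⟩ => ⟨?_, (quantile_le_iff hx).1 hs⟩
  exact lt_of_not_ge fun h => ht.not_ge ((quantile_le_iff hx).2 h)

lemma quantileCoupling_crossing_le (s t : ℝ) :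
    quantileCoupling P Q (crossing s t) ≤ P (Iic s) - Q (Iic t) + (Q (Iic s) - P (Iic t)) := by
  rw [quantileCoupling, Measure.map_apply_of_aemeasurable aemeasurable_quantile_prodMk
    (measurableSet_crossing s t)]
  exact (measure_union_le _ _).trans
    (add_le_add (volume_quantile_le_lt_quantile s t) (volume_quantile_le_lt_quantile s t))

lemma lintegral_cost_quantileCoupling_le {π : Measure (ℝ × ℝ)} [SFinite π]
    (hP : π.map Prod.fst = P) (hQ : π.map Prod.snd = Q) :
    ∫⁻ p, ENNReal.ofReal ((p.1 - p.2) ^ 2 / 2) ∂quantileCoupling P Q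
      ≤ ∫⁻ p, ENNReal.ofReal ((p.1 - p.2) ^ 2 / 2) ∂π := by
  rw [lintegral_cost_eq, lintegral_cost_eq]
  refine lintegral_mono fun q => ?_
  by_cases hq : q.1 < q.2
  · have hslice : (·, q) ⁻¹' layerSet = crossing q.1 q.2 := by ext p; simp [layerSet, hq]
    rw [hslice]
    exact (quantileCoupling_crossing_le _ _).trans (le_measure_crossing hP hQ hq)
  · have hslice : (·, q) ⁻¹' layerSet = ∅ := by ext p; simp [layerSet, hq]
    simp [hslice]

end QuantileCoupling

/-- The infimum of `∫ (u-v)²/2 dπ` over all couplings `π` of `P` and `Q`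
equals `∫₀¹ (F_P^←(x) - F_Q^←(x))²/2 dx` (half the squared 2-Wasserstein distance). -/
theorem stmt14 (P Q : Measure ℝ) [IsProbabilityMeasure P] [IsProbabilityMeasure Q] :
    sInf { I : ℝ≥0∞ | ∃ π : Measure (ℝ × ℝ), IsProbabilityMeasure π ∧
        π.map Prod.fst = P ∧ π.map Prod.snd = Q ∧
        I = ∫⁻ p, ENNReal.ofReal ((p.1 - p.2)^2 / 2) ∂π }
      = ∫⁻ x in Ioo (0:ℝ) 1, ENNReal.ofReal ((quantile P x - quantile Q x)^2 / 2) := by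
  rw [← lintegral_cost_quantileCoupling]
  refine le_antisymm (sInf_le ⟨_, inferInstance, map_fst_quantileCoupling,
    map_snd_quantileCoupling, rfl⟩) (le_sInf ?_)
  rintro _ ⟨π, hπ, hP, hQ, rfl⟩
  exact lintegral_cost_quantileCoupling_le hP hQ
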